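/- Let ρ_χ(p) = p |Ψ⟩⟨Ψ| + (1−p) |00⟩⟨00|⊗(I₂/2) with |Ψ⟩ = cos(π/8)|000⟩ + sin(π/8)|111⟩ and 0 ≤ p ≤ 1. Then (i) for all unit vectors a, a', b, b', c, c' ∈ ℝ³ the Svetlichny operator S satisfies |tr(S ρ_χ(p))| ≤ 4p, and (ii) there exist unit vectors a, a', b, b', c, c' ∈ ℝ³ with tr(S ρ_χ(p)) = 4p; in particular, since 4p ≤ 4 for p ≤ 1, ρ_χ(p) never violates the Svetlichny inequality |tr(Sρ)| ≤ 4. -/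

import Mathlib

open Matrix
open scoped Kronecker ComplexOrder

/-- The Pauli matrices σ₁, σ₂, σ₃ (indexed by `Fin 3`). -/
noncomputable def pauli : Fin 3 → Matrix (Fin 2) (Fin 2) ℂ :=
  ![!![0, 1; 1, 0], !![0, -Complex.I; Complex.I, 0], !![1, 0; 0, -1]]

/-- The observable `G = g₁σ₁ + g₂σ₂ + g₃σ₃` associated to a real vector `g ∈ ℝ³`. -/
noncomputable def obs (g : Fin 3 → ℝ) : Matrix (Fin 2) (Fin 2) ℂ :=
  ∑ i : Fin 3, ((g i : ℝ) : ℂ) • pauli i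

/-- The Svetlichny operator built from the unit vectors `a, a', b, b', c, c' ∈ ℝ³`. -/
noncomputable def svetlichny (a a' b b' c c' : Fin 3 → ℝ) :
    Matrix (Fin 2 × Fin 2 × Fin 2) (Fin 2 × Fin 2 × Fin 2) ℂ :=
  obs a ⊗ₖ ((obs b + obs b') ⊗ₖ obs c + (obs b - obs b') ⊗ₖ obs c')
    + obs a' ⊗ₖ ((obs b - obs b') ⊗ₖ obs c - (obs b + obs b') ⊗ₖ obs c')

/-- The vector `|Ψ⟩ = cos(π/8)|000⟩ + sin(π/8)|111⟩`. -/
noncomputable def psiChi : Fin 2 × Fin 2 × Fin 2 → ℂ :=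
  fun x => if x = (0, 0, 0) then ((Real.cos (Real.pi / 8) : ℝ) : ℂ)
    else if x = (1, 1, 1) then ((Real.sin (Real.pi / 8) : ℝ) : ℂ) else 0

/-- The rank-one projector `|0⟩⟨0|`. -/
noncomputable def E00 : Matrix (Fin 2) (Fin 2) ℂ := !![1, 0; 0, 0]

/-- The state `ρ_χ(p) = p|Ψ⟩⟨Ψ| + (1-p)|00⟩⟨00| ⊗ I₂/2`. -/
noncomputable def rhoChi (p : ℝ) :
    Matrix (Fin 2 × Fin 2 × Fin 2) (Fin 2 × Fin 2 × Fin 2) ℂ :=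
  (p : ℂ) • Matrix.vecMulVec psiChi (star psiChi)
    + ((1 - p : ℝ) : ℂ) • (E00 ⊗ₖ (E00 ⊗ₖ (((2 : ℂ))⁻¹ • (1 : Matrix (Fin 2) (Fin 2) ℂ))))

/-!
The noise part `|00⟩⟨00| ⊗ I₂/2` of `ρ_χ(p)` contributes nothing because Pauli observables are
traceless. On `|Ψ⟩`, `⟨A ⊗ B ⊗ C⟩ = cos(π/4)·a₂b₂c₂ + sin(π/4)·Re(αβγ)` with `α = a₀ + i a₁` and
likewise `β`, `γ`; this is `(√2/2)·⟪T_a b, c⟫` for a map `T_a` that is a contraction when `|a| ≤ 1`.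
So `tr(Sρ)` is `p·√2/2` times `⟪T_a(b+b') + T_{a'}(b-b'), c⟫ + ⟪T_a(b-b') - T_{a'}(b+b'), c'⟫`, which
Cauchy–Schwarz and the triangle inequality bound by `2(|b+b'| + |b-b'|) ≤ 4√2` (parallelogram law).
The bound is attained for `a = b = (1,0,0)`, `a' = b' = (0,1,0)`, `c, c' = (1, ∓1, 0)/√2`.
-/

open Real
open scoped InnerProductSpace

section SvetlichnyForm

variable {E F : Type*} [NormedAddCommGroup E] [InnerProductSpace ℝ E]
  [NormedAddCommGroup F] [InnerProductSpace ℝ F]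

theorem norm_add_add_norm_sub_le {x y : E} (hx : ‖x‖ ≤ 1) (hy : ‖y‖ ≤ 1) :
    ‖x + y‖ + ‖x - y‖ ≤ 2 * √2 := by
  have hpar := parallelogram_law_with_norm ℝ x y
  have h2 : √2 ^ 2 = 2 := Real.sq_sqrt zero_le_two
  nlinarith [sq_nonneg (‖x + y‖ - ‖x - y‖), norm_nonneg x, norm_nonneg y, norm_nonneg (x + y),
    norm_nonneg (x - y), Real.sqrt_nonneg 2, mul_le_mul hx hx (norm_nonneg x) zero_le_one,
    mul_le_mul hy hy (norm_nonneg y) zero_le_one]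

def svetlichnyForm (T T' : E → F) (b b' : E) (c c' : F) : ℝ :=
  ⟪T (b + b') + T' (b - b'), c⟫_ℝ + ⟪T (b - b') - T' (b + b'), c'⟫_ℝ

theorem abs_svetlichnyForm_le {T T' : E → F} (hT : ∀ x, ‖T x‖ ≤ ‖x‖) (hT' : ∀ x, ‖T' x‖ ≤ ‖x‖)
    {b b' : E} {c c' : F} (hb : ‖b‖ ≤ 1) (hb' : ‖b'‖ ≤ 1) (hc : ‖c‖ ≤ 1) (hc' : ‖c'‖ ≤ 1) :
    |svetlichnyForm T T' b b' c c'| ≤ 4 * √2 := by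
  have inner_le {u : F} {v : F} (hv : ‖v‖ ≤ 1) : |⟪u, v⟫_ℝ| ≤ ‖u‖ :=
    (abs_real_inner_le_norm u v).trans (mul_le_of_le_one_right (norm_nonneg u) hv)
  calc |svetlichnyForm T T' b b' c c'|
      ≤ ‖T (b + b') + T' (b - b')‖ + ‖T (b - b') - T' (b + b')‖ :=
        (abs_add_le _ _).trans (add_le_add (inner_le hc) (inner_le hc'))
    _ ≤ (‖T (b + b')‖ + ‖T' (b - b')‖) + (‖T (b - b')‖ + ‖T' (b + b')‖) :=
        add_le_add (norm_add_le _ _) (norm_sub_le _ _)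
    _ ≤ 2 * (‖b + b'‖ + ‖b - b'‖) := by
        linarith [hT (b + b'), hT' (b - b'), hT (b - b'), hT' (b + b')]
    _ ≤ 4 * √2 := by linarith [norm_add_add_norm_sub_le hb hb']

end SvetlichnyForm

/-- `T_x y = (Re(αβ), -Im(αβ), x₂y₂)` with `α = x₀ + i x₁`, `β = y₀ + i y₁`. -/
def ghzCorrelationMap (x : Fin 3 → ℝ) (y : EuclideanSpace ℝ (Fin 3)) :
    EuclideanSpace ℝ (Fin 3) :=
  !₂[x 0 * y 0 - x 1 * y 1, -(x 0 * y 1 + x 1 * y 0), x 2 * y 2]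

theorem norm_ghzCorrelationMap_le {x : Fin 3 → ℝ} (hx : ∑ i, x i ^ 2 ≤ 1)
    (y : EuclideanSpace ℝ (Fin 3)) : ‖ghzCorrelationMap x y‖ ≤ ‖y‖ := by
  rw [EuclideanSpace.norm_eq, EuclideanSpace.norm_eq]
  refine Real.sqrt_le_sqrt ?_
  simp only [Fin.sum_univ_three, Real.norm_eq_abs, sq_abs] at hx ⊢
  simp only [ghzCorrelationMap, Fin.isValue, neg_add_rev, cons_val_zero, cons_val_one, cons_val]
  nlinarith [sq_nonneg (x 0), sq_nonneg (x 1), sq_nonneg (x 2), sq_nonneg (y 0), sq_nonneg (y 1),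
    sq_nonneg (y 2), mul_nonneg (sq_nonneg (x 2)) (sq_nonneg (y 0))]

theorem obs_add (g h : Fin 3 → ℝ) : obs (g + h) = obs g + obs h := by
  simp [obs, add_smul, Finset.sum_add_distrib]

theorem obs_sub (g h : Fin 3 → ℝ) : obs (g - h) = obs g - obs h := by
  simp [obs, sub_smul, Finset.sum_sub_distrib]

theorem obs_eq (g : Fin 3 → ℝ) :
    obs g = !![(g 2 : ℂ), g 0 - g 1 * Complex.I; g 0 + g 1 * Complex.I, -(g 2 : ℂ)] := by
  ext i j
  fin_cases i <;> fin_cases j <;> simp [obs, pauli, Fin.sum_univ_three]; ring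

theorem trace_obs (g : Fin 3 → ℝ) : (obs g).trace = 0 := by
  simp [obs_eq, Matrix.trace_fin_two]

theorem trace_mul_vecMulVec_psiChi (M : Matrix (Fin 2 × Fin 2 × Fin 2) (Fin 2 × Fin 2 × Fin 2) ℂ) :
    (M * vecMulVec psiChi (star psiChi)).trace =
      Real.cos (π / 8) ^ 2 * M (0, 0, 0) (0, 0, 0) + Real.sin (π / 8) ^ 2 * M (1, 1, 1) (1, 1, 1)
        + Real.cos (π / 8) * Real.sin (π / 8) * (M (0, 0, 0) (1, 1, 1) + M (1, 1, 1) (0, 0, 0)) := by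
  rw [mul_vecMulVec, trace_vecMulVec]
  unfold psiChi
  generalize Real.cos (π / 8) = c
  generalize Real.sin (π / 8) = s
  simp only [dotProduct, mulVec, Fin.isValue, mul_ite, mul_zero, Fintype.sum_prod_type,
    Prod.mk.injEq, Fin.sum_univ_two, and_true, zero_ne_one, and_false, ↓reduceIte, one_ne_zero,
    add_zero, zero_add, Pi.star_apply, RCLike.star_def, map_zero, Complex.conj_ofReal]
  ring

theorem cos_sq_sub_sin_sq_pi_div_eight : Real.cos (π / 8) ^ 2 - Real.sin (π / 8) ^ 2 = √2 / 2 := by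
  rw [← Real.cos_two_mul', show 2 * (π / 8) = π / 4 by ring, Real.cos_pi_div_four]

theorem cos_mul_sin_pi_div_eight : Real.cos (π / 8) * Real.sin (π / 8) = √2 / 4 := by
  have h := Real.sin_two_mul (π / 8)
  rw [show 2 * (π / 8) = π / 4 by ring, Real.sin_pi_div_four] at h
  linarith

theorem trace_kron_obs_mul_vecMulVec_psiChi (x y z : Fin 3 → ℝ) :
    ((obs x ⊗ₖ (obs y ⊗ₖ obs z)) * vecMulVec psiChi (star psiChi)).trace =
      ((√2 / 2 * ⟪ghzCorrelationMap x (WithLp.toLp 2 y), WithLp.toLp 2 z⟫_ℝ : ℝ) : ℂ) := by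
  rw [trace_mul_vecMulVec_psiChi]
  have hdiff := cos_sq_sub_sin_sq_pi_div_eight
  have hprod := cos_mul_sin_pi_div_eight
  generalize Real.cos (π / 8) = c at hdiff hprod ⊢
  generalize Real.sin (π / 8) = s at hdiff hprod ⊢
  have hdiffC : (c : ℂ) ^ 2 - (s : ℂ) ^ 2 = (√2 : ℂ) / 2 := by exact_mod_cast hdiff
  have hprodC : (c : ℂ) * s = (√2 : ℂ) / 4 := by exact_mod_cast hprod
  simp only [obs_eq, Fin.isValue, kroneckerMap_apply, of_apply, cons_val', cons_val_zero,
    cons_val_fin_one, cons_val_one, mul_neg, neg_mul, neg_neg, ghzCorrelationMap, neg_add_rev,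
    PiLp.inner_apply, RCLike.inner_apply, ringHom_apply, Fin.sum_univ_three, cons_val,
    Complex.ofReal_mul, Complex.ofReal_div, Complex.ofReal_ofNat, Complex.ofReal_add,
    Complex.ofReal_sub, Complex.ofReal_neg]
  set Q : ℂ := x 0 * y 1 * z 1 + x 1 * y 0 * z 1 + x 1 * y 1 * z 0
  linear_combination (x 2 * y 2 * z 2 : ℂ) * hdiffC
    + (2 * x 0 * y 0 * z 0 + 2 * Complex.I ^ 2 * Q : ℂ) * hprodC + (√2 / 2 * Q : ℂ) * Complex.I_sq

theorem trace_kron_obs_mul_E00_kron_E00 (x y z : Fin 3 → ℝ) :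
    ((obs x ⊗ₖ (obs y ⊗ₖ obs z)) * (E00 ⊗ₖ (E00 ⊗ₖ ((2 : ℂ)⁻¹ • 1)))).trace = 0 := by
  rw [← mul_kronecker_mul, ← mul_kronecker_mul, trace_kronecker, trace_kronecker,
    Matrix.mul_smul, Matrix.mul_one, trace_smul, trace_obs, smul_zero, mul_zero, mul_zero]

theorem trace_kron_obs_mul_rhoChi (p : ℝ) (x y z : Fin 3 → ℝ) :
    ((obs x ⊗ₖ (obs y ⊗ₖ obs z)) * rhoChi p).trace =
      ((p * (√2 / 2) * ⟪ghzCorrelationMap x (WithLp.toLp 2 y), WithLp.toLp 2 z⟫_ℝ : ℝ) : ℂ) := by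
  rw [rhoChi, Matrix.mul_add, Matrix.mul_smul, Matrix.mul_smul, trace_add, trace_smul, trace_smul,
    trace_kron_obs_mul_vecMulVec_psiChi, trace_kron_obs_mul_E00_kron_E00]
  push_cast
  ring

theorem svetlichny_eq (a a' b b' c c' : Fin 3 → ℝ) :
    svetlichny a a' b b' c c' =
      obs a ⊗ₖ (obs (b + b') ⊗ₖ obs c) + obs a ⊗ₖ (obs (b - b') ⊗ₖ obs c')
        + obs a' ⊗ₖ (obs (b - b') ⊗ₖ obs c) - obs a' ⊗ₖ (obs (b + b') ⊗ₖ obs c') := by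
  ext ⟨i, j, k⟩ ⟨i', j', k'⟩
  simp only [svetlichny, Matrix.add_apply, kroneckerMap_apply, Matrix.sub_apply, obs_add, obs_sub]
  ring

theorem trace_svetlichny_mul_rhoChi (p : ℝ) (a a' b b' c c' : Fin 3 → ℝ) :
    (svetlichny a a' b b' c c' * rhoChi p).trace =
      ((p * (√2 / 2) * svetlichnyForm (ghzCorrelationMap a) (ghzCorrelationMap a')
        (WithLp.toLp 2 b) (WithLp.toLp 2 b') (WithLp.toLp 2 c) (WithLp.toLp 2 c') : ℝ) : ℂ) := by
  simp only [svetlichny_eq, Matrix.add_mul, Matrix.sub_mul, trace_add, trace_sub,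
    trace_kron_obs_mul_rhoChi, svetlichnyForm, inner_add_left, inner_sub_left, WithLp.toLp_add,
    WithLp.toLp_sub]
  push_cast
  ring

theorem norm_toLp_le_one {n : Type*} [Fintype n] {x : n → ℝ} (hx : ∑ i, x i ^ 2 ≤ 1) :
    ‖WithLp.toLp 2 x‖ ≤ 1 :=
  (pow_le_one_iff_of_nonneg (norm_nonneg _) two_ne_zero).1 <| by
    rwa [EuclideanSpace.real_norm_sq_eq]

theorem svetlichnyForm_ghzCorrelationMap_optimal :
    svetlichnyForm (ghzCorrelationMap ![1, 0, 0]) (ghzCorrelationMap ![0, 1, 0])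
      (WithLp.toLp 2 ![1, 0, 0]) (WithLp.toLp 2 ![0, 1, 0])
      (WithLp.toLp 2 ![√2 / 2, -(√2 / 2), 0]) (WithLp.toLp 2 ![√2 / 2, √2 / 2, 0]) = 4 * √2 := by
  simp only [svetlichnyForm, ghzCorrelationMap, Fin.isValue, cons_val_zero, PiLp.add_apply,
    add_zero, mul_one, cons_val_one, zero_add, sub_zero, cons_val, mul_zero, PiLp.sub_apply, zero_sub,
    mul_neg, sub_neg_eq_add, neg_zero, sub_self, PiLp.inner_apply, RCLike.inner_apply, ringHom_apply,
    Fin.sum_univ_three, neg_mul, neg_neg]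
  ring

/-- (i) Every Svetlichny operator mean value on `ρ_χ(p)` is bounded by `4p`;
(ii) the bound `4p` is attained; in particular `ρ_χ(p)` never violates the
Svetlichny inequality `|tr(Sρ)| ≤ 4`. -/
theorem svetlichny_rhoChi (p : ℝ) (hp0 : 0 ≤ p) (hp1 : p ≤ 1) :
    (∀ a a' b b' c c' : Fin 3 → ℝ,
      (∑ i : Fin 3, a i ^ 2 = 1) → (∑ i : Fin 3, a' i ^ 2 = 1) →
      (∑ i : Fin 3, b i ^ 2 = 1) → (∑ i : Fin 3, b' i ^ 2 = 1) →
      (∑ i : Fin 3, c i ^ 2 = 1) → (∑ i : Fin 3, c' i ^ 2 = 1) →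
      ‖(svetlichny a a' b b' c c' * rhoChi p).trace‖ ≤ 4 * p)
    ∧ (∃ a a' b b' c c' : Fin 3 → ℝ,
      (∑ i : Fin 3, a i ^ 2 = 1) ∧ (∑ i : Fin 3, a' i ^ 2 = 1) ∧
      (∑ i : Fin 3, b i ^ 2 = 1) ∧ (∑ i : Fin 3, b' i ^ 2 = 1) ∧
      (∑ i : Fin 3, c i ^ 2 = 1) ∧ (∑ i : Fin 3, c' i ^ 2 = 1) ∧
      (svetlichny a a' b b' c c' * rhoChi p).trace = ((4 * p : ℝ) : ℂ))
    ∧ (∀ a a' b b' c c' : Fin 3 → ℝ,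
      (∑ i : Fin 3, a i ^ 2 = 1) → (∑ i : Fin 3, a' i ^ 2 = 1) →
      (∑ i : Fin 3, b i ^ 2 = 1) → (∑ i : Fin 3, b' i ^ 2 = 1) →
      (∑ i : Fin 3, c i ^ 2 = 1) → (∑ i : Fin 3, c' i ^ 2 = 1) →
      ‖(svetlichny a a' b b' c c' * rhoChi p).trace‖ ≤ 4) := by
  have hsqrt : √2 * √2 = 2 := Real.mul_self_sqrt zero_le_two
  have bound : ∀ a a' b b' c c' : Fin 3 → ℝ,
      (∑ i : Fin 3, a i ^ 2 = 1) → (∑ i : Fin 3, a' i ^ 2 = 1) →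
      (∑ i : Fin 3, b i ^ 2 = 1) → (∑ i : Fin 3, b' i ^ 2 = 1) →
      (∑ i : Fin 3, c i ^ 2 = 1) → (∑ i : Fin 3, c' i ^ 2 = 1) →
      ‖(svetlichny a a' b b' c c' * rhoChi p).trace‖ ≤ 4 * p := by
    intro a a' b b' c c' ha ha' hb hb' hc hc'
    rw [trace_svetlichny_mul_rhoChi, Complex.norm_real, Real.norm_eq_abs, abs_mul,
      abs_of_nonneg (by positivity)]
    calc p * (√2 / 2) * |svetlichnyForm _ _ _ _ _ _|
        ≤ p * (√2 / 2) * (4 * √2) := by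
          gcongr
          exact abs_svetlichnyForm_le (norm_ghzCorrelationMap_le ha.le)
            (norm_ghzCorrelationMap_le ha'.le) (norm_toLp_le_one hb.le) (norm_toLp_le_one hb'.le)
            (norm_toLp_le_one hc.le) (norm_toLp_le_one hc'.le)
      _ = 4 * p := by linear_combination 2 * p * hsqrt
  refine ⟨bound, ⟨![1, 0, 0], ![0, 1, 0], ![1, 0, 0], ![0, 1, 0], ![√2 / 2, -(√2 / 2), 0],
    ![√2 / 2, √2 / 2, 0], ?_⟩, fun a a' b b' c c' ha ha' hb hb' hc hc' =>
      (bound a a' b b' c c' ha ha' hb hb' hc hc').trans (by linarith)⟩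
  refine ⟨?_, ?_, ?_, ?_, ?_, ?_, ?_⟩
  rotate_left 6
  · rw [trace_svetlichny_mul_rhoChi, svetlichnyForm_ghzCorrelationMap_optimal]
    congr 1
    linear_combination 2 * p * hsqrt
  all_goals norm_num [Fin.sum_univ_three, div_pow, cons_val_two]
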